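/- Let a : K^p → F^g be an annotation of the p-simplices of a simplicial complex K with values in F^g, for a field F, extended linearly to p-chains. Then a is valid (meaning g = rank H_p(K; F) and two p-cycles z₁, z₂ satisfy a_{z₁} = a_{z₂} iff [z₁] = [z₂] in H_p(K; F)) if and only if the g cochains φ_j defined by φ_j(σ) = a_σ[j] for all p-simplices σ are all cocycles and their cohomology classes {[φ_j]}_{j=1,…,g} form a basis of H^p(K; F). -/

import Mathlib

/-! The dot product identifies cochains with the dual of chains, and under this identification
the coboundary is the transpose of the boundary. Hence the cocycles are exactly the cochains
vanishing on boundaries, the coboundaries exactly those vanishing on cycles, and `H^p` and `H_p`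
have the same dimension. Let `P` be the matrix with rows `φ_j`, so that the annotation of `z` is `P z`.
Validity says that on cycles `P` has kernel exactly the boundaries and that `g = dim H_p`; then
`P` maps the cycles onto `F^g`. Testing a combination of the `φ_j` against cycles sent to unit
vectors shows that the classes `[φ_j]` are independent, and a dimension count makes them a basis.
Conversely, if the `[φ_j]` span `H^p`, a cycle killed by every `φ_j` is killed by every cocycle,
hence is a boundary. -/

/-- The annotation of a chain `c = Σ c σ • σ`, extended linearly from the annotation
of the simplices. -/
noncomputable def annChain {F : Type*} [Field F] {ι : Type*} [Fintype ι] {g : ℕ}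
    (a : ι → Fin g → F) (c : ι → F) : Fin g → F :=
  ∑ σ : ι, c σ • a σ

/-- The homology class of a cycle `z` (an element of `ker dlow`), in the homology group
`ker dlow ⧸ im dhigh`, where `dlow` is the boundary map out of `p`-chains and `dhigh` the
boundary map into `p`-chains. -/
noncomputable def homCls {F : Type*} [Field F] {ι κ μ : Type*}
    (dlow : (ι → F) →ₗ[F] (κ → F)) (dhigh : (μ → F) →ₗ[F] (ι → F))
    (z : ι → F) (hz : z ∈ LinearMap.ker dlow) :
    (LinearMap.ker dlow) ⧸
      (LinearMap.range dhigh).comap (LinearMap.ker dlow).subtype :=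
  Submodule.Quotient.mk ⟨z, hz⟩

/-- An annotation `a : K^p → F^g` is valid if `g = dim H_p` and two cycles have equal
annotations iff their homology classes coincide. -/
noncomputable def IsValidAnnotation {F : Type*} [Field F] {ι κ μ : Type*} [Fintype ι]
    {g : ℕ} (dlow : (ι → F) →ₗ[F] (κ → F)) (dhigh : (μ → F) →ₗ[F] (ι → F))
    (a : ι → Fin g → F) : Prop :=
  g = Module.finrank F ((LinearMap.ker dlow) ⧸
        (LinearMap.range dhigh).comap (LinearMap.ker dlow).subtype) ∧
  ∀ z₁ z₂ (h₁ : z₁ ∈ LinearMap.ker dlow) (h₂ : z₂ ∈ LinearMap.ker dlow),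
    (annChain a z₁ = annChain a z₂ ↔ homCls dlow dhigh z₁ h₁ = homCls dlow dhigh z₂ h₂)

/-- The simplicial coboundary map induced by a boundary map `d` on chains:
`(coboundary d) φ = φ ∘ d` under the standard pairing of cochains and chains. -/
noncomputable def coboundary {F : Type*} [Field F] {α β : Type*} [DecidableEq α]
    [Fintype β] (d : (α → F) →ₗ[F] (β → F)) : (β → F) →ₗ[F] (α → F) :=
  (Matrix.of fun (x : α) (y : β) => d (Pi.single x 1) y).mulVecLin

open Module Matrix

section Subquotient

variable {K W η : Type*} [Field K] [AddCommGroup W] [Module K W] [Fintype η]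
  {M N : Submodule K W}

lemma finrank_subquotient_add_finrank [FiniteDimensional K W] (hNM : N ≤ M) :
    finrank K (M ⧸ N.comap M.subtype) + finrank K N = finrank K M := by
  rw [← (Submodule.comapSubtypeEquivOfLe hNM).finrank_eq]
  exact Submodule.finrank_quotient_add_finrank _

lemma linearIndependent_subquotient_mk {v : η → W} (hv : ∀ i, v i ∈ M)
    (h : ∀ c : η → K, ∑ i, c i • v i ∈ N → c = 0) :
    LinearIndependent K fun i =>
      (Submodule.Quotient.mk ⟨v i, hv i⟩ : M ⧸ N.comap M.subtype) := by
  rw [Fintype.linearIndependent_iff]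
  intro c hc
  refine congrFun (h c ?_)
  simp only [← Submodule.mkQ_apply, ← map_smul, ← map_sum] at hc
  rw [Submodule.mkQ_apply, Submodule.Quotient.mk_eq_zero, Submodule.mem_comap] at hc
  simpa using hc

lemma exists_sub_sum_mem_of_span_subquotient_mk_eq_top {v : η → W} (hv : ∀ i, v i ∈ M)
    (hspan : Submodule.span K (Set.range fun i =>
      (Submodule.Quotient.mk ⟨v i, hv i⟩ : M ⧸ N.comap M.subtype)) = ⊤)
    {w : W} (hw : w ∈ M) : ∃ c : η → K, w - ∑ i, c i • v i ∈ N := by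
  obtain ⟨c, hc⟩ := (Submodule.mem_span_range_iff_exists_fun K).mp
    (hspan ▸ Submodule.mem_top : Submodule.Quotient.mk ⟨w, hw⟩ ∈ _)
  simp only [← Submodule.mkQ_apply, ← map_smul, ← map_sum] at hc
  rw [Submodule.mkQ_apply, Submodule.mkQ_apply, eq_comm, Submodule.Quotient.eq,
    Submodule.mem_comap] at hc
  exact ⟨c, by simpa using hc⟩

lemma map_eq_top_of_finrank_subquotient_eq [FiniteDimensional K W] {W' : Type*} [AddCommGroup W']
    [Module K W'] [FiniteDimensional K W'] (T : W →ₗ[K] W') (hNM : N ≤ M)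
    (hker : ∀ z ∈ M, T z = 0 ↔ z ∈ N) (hdim : finrank K (M ⧸ N.comap M.subtype) = finrank K W') :
    M.map T = ⊤ := by
  have hker' : LinearMap.ker (T ∘ₗ M.subtype) = N.comap M.subtype := by
    ext ⟨z, hz⟩
    exact hker z hz
  have hrank := LinearMap.finrank_range_add_finrank_ker (T ∘ₗ M.subtype)
  rw [hker', (Submodule.comapSubtypeEquivOfLe hNM).finrank_eq,
    ← finrank_subquotient_add_finrank hNM, hdim, LinearMap.range_comp,
    Submodule.range_subtype] at hrank
  exact Submodule.eq_top_of_finrank_eq (by omega)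

end Subquotient

section Coboundary

variable {F : Type*} [Field F] {α β : Type*} [Fintype α] [Fintype β] [DecidableEq α]

lemma coboundary_eq_transpose_mulVecLin (d : (α → F) →ₗ[F] (β → F)) :
    coboundary d = (LinearMap.toMatrix' d)ᵀ.mulVecLin := rfl

lemma coboundary_dotProduct (d : (α → F) →ₗ[F] (β → F)) (φ : β → F) (c : α → F) :
    coboundary d φ ⬝ᵥ c = φ ⬝ᵥ d c := by
  rw [coboundary_eq_transpose_mulVecLin, mulVecLin_apply, dotProduct_comm, dotProduct_mulVec,
    vecMul_transpose, LinearMap.toMatrix'_mulVec, dotProduct_comm]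

lemma coboundary_coboundary [DecidableEq β] (d : (α → F) →ₗ[F] (β → F)) :
    coboundary (coboundary d) = d := by
  rw [coboundary_eq_transpose_mulVecLin, coboundary_eq_transpose_mulVecLin,
    ← Matrix.toLin'_apply' (LinearMap.toMatrix' d)ᵀ, LinearMap.toMatrix'_toLin',
    transpose_transpose, ← Matrix.toLin'_apply', Matrix.toLin'_toMatrix']

lemma mem_ker_coboundary_iff (d : (α → F) →ₗ[F] (β → F)) (φ : β → F) :
    φ ∈ LinearMap.ker (coboundary d) ↔ ∀ c, φ ⬝ᵥ d c = 0 := by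
  simp_rw [LinearMap.mem_ker, ← coboundary_dotProduct, dotProduct_eq_zero_iff]

lemma mem_range_coboundary_iff (d : (α → F) →ₗ[F] (β → F)) (φ : α → F) :
    φ ∈ LinearMap.range (coboundary d) ↔ ∀ z ∈ LinearMap.ker d, φ ⬝ᵥ z = 0 := by
  classical
  constructor
  · rintro ⟨ψ, rfl⟩ z hz
    rw [coboundary_dotProduct, LinearMap.mem_ker.mp hz, dotProduct_zero]
  · intro h
    obtain ⟨f, hf⟩ : dotProductEquiv F α φ ∈ LinearMap.range d.dualMap := by
      rw [LinearMap.range_dualMap_eq_dualAnnihilator_ker, Submodule.mem_dualAnnihilator]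
      exact h
    refine ⟨(dotProductEquiv F β).symm f,
      (dotProductEquiv F α).injective <| LinearMap.ext fun c => ?_⟩
    rw [← hf, dotProductEquiv_apply_apply, coboundary_dotProduct, LinearMap.dualMap_apply,
      ← dotProductEquiv_apply_apply, LinearEquiv.apply_symm_apply]

lemma mem_range_iff_forall_mem_ker_coboundary [DecidableEq β] (d : (α → F) →ₗ[F] (β → F))
    (z : β → F) :
    z ∈ LinearMap.range d ↔ ∀ ψ ∈ LinearMap.ker (coboundary d), ψ ⬝ᵥ z = 0 := by
  conv_lhs => rw [← coboundary_coboundary d]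
  simp_rw [mem_range_coboundary_iff, dotProduct_comm z]

lemma finrank_range_coboundary (d : (α → F) →ₗ[F] (β → F)) :
    finrank F (LinearMap.range (coboundary d)) = finrank F (LinearMap.range d) := by
  rw [coboundary_eq_transpose_mulVecLin, ← Matrix.rank, rank_transpose, Matrix.rank,
    ← Matrix.toLin'_apply', Matrix.toLin'_toMatrix']

end Coboundary

abbrev Homology {K V V₁ V₂ : Type*} [Field K] [AddCommGroup V] [Module K V] [AddCommGroup V₁]
    [Module K V₁] [AddCommGroup V₂] [Module K V₂] (d₁ : V →ₗ[K] V₁) (d₂ : V₂ →ₗ[K] V) :=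
  LinearMap.ker d₁ ⧸ (LinearMap.range d₂).comap (LinearMap.ker d₁).subtype

lemma homCls_eq_homCls_iff {F ι κ μ : Type*} [Field F] {dlow : (ι → F) →ₗ[F] (κ → F)}
    {dhigh : (μ → F) →ₗ[F] (ι → F)} {z₁ z₂ : ι → F} (h₁ : z₁ ∈ LinearMap.ker dlow)
    (h₂ : z₂ ∈ LinearMap.ker dlow) :
    homCls dlow dhigh z₁ h₁ = homCls dlow dhigh z₂ h₂ ↔ z₁ - z₂ ∈ LinearMap.range dhigh := by
  rw [homCls, homCls, Submodule.Quotient.eq, Submodule.mem_comap]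
  rfl

section ChainComplex

variable {F : Type*} [Field F] {ι κ μ η : Type*} [Fintype ι] [Fintype κ] [Fintype μ]
  [DecidableEq ι] [DecidableEq μ] [Fintype η]
  {dlow : (ι → F) →ₗ[F] (κ → F)} {dhigh : (μ → F) →ₗ[F] (ι → F)}

lemma range_coboundary_le_ker_coboundary (hdd : dlow ∘ₗ dhigh = 0) :
    LinearMap.range (coboundary dlow) ≤ LinearMap.ker (coboundary dhigh) := by
  intro φ hφ
  rw [mem_ker_coboundary_iff]
  exact fun c => (mem_range_coboundary_iff dlow φ).1 hφ _
    (LinearMap.range_le_ker_iff.2 hdd ⟨c, rfl⟩)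

lemma finrank_cohomology_eq_finrank_homology (hdd : dlow ∘ₗ dhigh = 0) :
    finrank F (Homology (coboundary dhigh) (coboundary dlow)) =
      finrank F (Homology dlow dhigh) := by
  have hH : finrank F (Homology dlow dhigh) + _ = _ :=
    finrank_subquotient_add_finrank (LinearMap.range_le_ker_iff.2 hdd)
  have hH' : finrank F (Homology (coboundary dhigh) (coboundary dlow)) + _ = _ :=
    finrank_subquotient_add_finrank (range_coboundary_le_ker_coboundary hdd)
  have hlow := LinearMap.finrank_range_add_finrank_ker dlow
  have hhigh := LinearMap.finrank_range_add_finrank_ker (coboundary dhigh)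
  rw [finrank_range_coboundary] at hH' hhigh
  omega

def IsCohomologyBasis (dlow : (ι → F) →ₗ[F] (κ → F)) (dhigh : (μ → F) →ₗ[F] (ι → F))
    (P : Matrix η ι F) : Prop :=
  ∃ hco : ∀ j, P j ∈ LinearMap.ker (coboundary dhigh),
    LinearIndependent F (fun j =>
      (Submodule.Quotient.mk ⟨P j, hco j⟩ : Homology (coboundary dhigh) (coboundary dlow))) ∧
    Submodule.span F (Set.range fun j =>
      (Submodule.Quotient.mk ⟨P j, hco j⟩ : Homology (coboundary dhigh) (coboundary dlow))) = ⊤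

lemma isCohomologyBasis_of_forall_mulVec_eq_zero_iff (hdd : dlow ∘ₗ dhigh = 0)
    {P : Matrix η ι F} (hdim : Fintype.card η = finrank F (Homology dlow dhigh))
    (hker : ∀ z ∈ LinearMap.ker dlow, P *ᵥ z = 0 ↔ z ∈ LinearMap.range dhigh) :
    IsCohomologyBasis dlow dhigh P := by
  have hBZ := LinearMap.range_le_ker_iff.2 hdd
  have hco : ∀ j, P j ∈ LinearMap.ker (coboundary dhigh) := fun j =>
    (mem_ker_coboundary_iff _ _).2 fun c => congrFun ((hker _ (hBZ ⟨c, rfl⟩)).2 ⟨c, rfl⟩) j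
  have hsurj : (LinearMap.ker dlow).map P.mulVecLin = ⊤ :=
    map_eq_top_of_finrank_subquotient_eq _ hBZ hker (by simp [hdim])
  have hind := linearIndependent_subquotient_mk (N := LinearMap.range (coboundary dlow)) hco
    fun c hc => funext fun j => by
      classical
      obtain ⟨z, hz, hPz⟩ := hsurj.ge (Submodule.mem_top (x := Pi.single j 1))
      have := (mem_range_coboundary_iff dlow _).1 hc z hz
      rwa [← vecMul_eq_sum, ← dotProduct_mulVec, ← mulVecLin_apply, hPz,
        dotProduct_single_one] at this
  refine ⟨hco, hind, hind.span_eq_top_of_card_eq_finrank' ?_⟩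
  rw [finrank_cohomology_eq_finrank_homology hdd, hdim]

lemma forall_mulVec_eq_zero_iff_of_isCohomologyBasis (hdd : dlow ∘ₗ dhigh = 0)
    {P : Matrix η ι F} (hP : IsCohomologyBasis dlow dhigh P) :
    Fintype.card η = finrank F (Homology dlow dhigh) ∧
      ∀ z ∈ LinearMap.ker dlow, P *ᵥ z = 0 ↔ z ∈ LinearMap.range dhigh := by
  obtain ⟨hco, hind, hspan⟩ := hP
  refine ⟨?_, fun z hz => ⟨fun hPz => ?_, ?_⟩⟩
  · rw [← finrank_cohomology_eq_finrank_homology hdd,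
      finrank_eq_card_basis (Basis.mk hind hspan.ge)]
  · rw [mem_range_iff_forall_mem_ker_coboundary]
    intro ψ hψ
    obtain ⟨c, hc⟩ := exists_sub_sum_mem_of_span_subquotient_mk_eq_top hco hspan hψ
    have := (mem_range_coboundary_iff dlow _).1 hc z hz
    rwa [← vecMul_eq_sum, sub_dotProduct, ← dotProduct_mulVec, hPz, dotProduct_zero,
      sub_zero] at this
  · rintro ⟨c, rfl⟩
    exact funext fun j => (mem_ker_coboundary_iff _ _).1 (hco j) c

theorem isCohomologyBasis_iff (hdd : dlow ∘ₗ dhigh = 0) {P : Matrix η ι F} :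
    IsCohomologyBasis dlow dhigh P ↔ Fintype.card η = finrank F (Homology dlow dhigh) ∧
      ∀ z ∈ LinearMap.ker dlow, P *ᵥ z = 0 ↔ z ∈ LinearMap.range dhigh :=
  ⟨forall_mulVec_eq_zero_iff_of_isCohomologyBasis hdd,
    fun h => isCohomologyBasis_of_forall_mulVec_eq_zero_iff hdd h.1 h.2⟩

end ChainComplex

section Annotation

variable {F ι κ μ : Type*} [Field F] [Fintype ι] {g : ℕ}
  {dlow : (ι → F) →ₗ[F] (κ → F)} {dhigh : (μ → F) →ₗ[F] (ι → F)}

lemma annChain_eq_mulVec (a : ι → Fin g → F) (c : ι → F) : annChain a c = (of a)ᵀ *ᵥ c := by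
  ext j
  simp [annChain, mulVec, dotProduct, Finset.sum_apply, mul_comm]

lemma isValidAnnotation_iff {a : ι → Fin g → F} :
    IsValidAnnotation dlow dhigh a ↔ g = finrank F (Homology dlow dhigh) ∧
      ∀ z ∈ LinearMap.ker dlow, (of a)ᵀ *ᵥ z = 0 ↔ z ∈ LinearMap.range dhigh := by
  refine and_congr_right fun _ => ⟨fun h z hz => ?_, fun h z₁ z₂ h₁ h₂ => ?_⟩
  · have := h z 0 hz (Submodule.zero_mem _)
    rwa [homCls_eq_homCls_iff, sub_zero, annChain_eq_mulVec, annChain_eq_mulVec,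
      mulVec_zero] at this
  · rw [homCls_eq_homCls_iff, ← h _ (sub_mem h₁ h₂), mulVec_sub, sub_eq_zero,
      annChain_eq_mulVec, annChain_eq_mulVec]

end Annotation

/-- Proposition 1 of the paper: an annotation `a : K^p → F^g` is valid iff the cochains
`φ_j(σ) = a_σ[j]` are cocycles whose cohomology classes form a basis of `H^p(K; F)`.
Here `dlow` is the boundary map out of `p`-chains (so `coboundary dlow` is the coboundary
into `p`-cochains) and `dhigh` the boundary map into `p`-chains (so `coboundary dhigh` is
the coboundary out of `p`-cochains). -/
theorem valid_iff_cocycle_basis {F : Type*} [Field F] {ι κ μ : Type*}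
    [Fintype ι] [Fintype κ] [Fintype μ] [DecidableEq ι] [DecidableEq μ] {g : ℕ}
    (dlow : (ι → F) →ₗ[F] (κ → F)) (dhigh : (μ → F) →ₗ[F] (ι → F))
    (hdd : dlow ∘ₗ dhigh = 0)
    (a : ι → Fin g → F) :
    IsValidAnnotation dlow dhigh a ↔
      ∃ hco : ∀ j : Fin g, (fun σ => a σ j) ∈ LinearMap.ker (coboundary dhigh),
        LinearIndependent F
          (fun j : Fin g =>
            (Submodule.Quotient.mk (⟨fun σ => a σ j, hco j⟩ :
                LinearMap.ker (coboundary dhigh)) :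
              (LinearMap.ker (coboundary dhigh)) ⧸
                (LinearMap.range (coboundary dlow)).comap
                  (LinearMap.ker (coboundary dhigh)).subtype)) ∧
        Submodule.span F (Set.range (fun j : Fin g =>
            (Submodule.Quotient.mk (⟨fun σ => a σ j, hco j⟩ :
                LinearMap.ker (coboundary dhigh)) :
              (LinearMap.ker (coboundary dhigh)) ⧸
                (LinearMap.range (coboundary dlow)).comap
                  (LinearMap.ker (coboundary dhigh)).subtype))) = ⊤ := by
  have h := isCohomologyBasis_iff hdd (P := (of a)ᵀ)
  rw [Fintype.card_fin] at h
  exact isValidAnnotation_iff.trans h.symm
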